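/- Let O be a finite set of objects, each with a class label, with at least one heterogeneous pair (pair of objects with distinct classes). For a subset A ⊆ O let P(A) denote the number of heterogeneous pairs within A. For an object x_i and a set of tests S, let N(x_i, S) be the set of objects agreeing with x_i on all tests in S. Then the function g_i(S) = (P(O) − P(N(x_i, S))) / P(O) is monotone non-decreasing and submodular, with g_i(∅) = 0 and 0 ≤ g_i(S) ≤ 1. -/

import Mathlib

/-!
Adding tests only shrinks `N(x, S)`, and adding a test `t` intersects `N(x, S)` with the fixed
set `N(x, {t})`. The heterogeneous-pair count `P` is monotone and supermodular: the heterogeneous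
pairs of `A ∩ B` are those common to `A` and `B`, and those of `A` and of `B` all lie in
`A ∪ B`. Hence the loss `P(A) - P(A ∩ N)` caused by intersecting with `N` grows with `A`, which
is the diminishing-returns property of `S ↦ P(O) - P(N(x, S))`.
-/

/-- The number of heterogeneous (unordered) pairs in `A`. -/
def hetPairs {O C : Type*} [DecidableEq O] [DecidableEq C]
    (cls : O → C) (A : Finset O) : ℕ :=
  (A.offDiag.filter (fun p => cls p.1 ≠ cls p.2)).card / 2

/-- The set of objects agreeing with `x` on all tests in `S`. -/
def agreeSet {O T V : Type*} [Fintype O] [DecidableEq V]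
    (val : T → O → V) (x : O) (S : Finset T) : Finset O :=
  Finset.univ.filter (fun y => ∀ t ∈ S, val t y = val t x)

/-- The scaled heterogeneous-pair-exclusion function `g_i`. -/
noncomputable def pairExcl {O T C V : Type*} [Fintype O] [DecidableEq O] [DecidableEq C] [DecidableEq V]
    (cls : O → C) (val : T → O → V) (x : O) (S : Finset T) : ℝ :=
  ((hetPairs cls (Finset.univ : Finset O) : ℝ) - (hetPairs cls (agreeSet val x S) : ℝ)) /
    (hetPairs cls (Finset.univ : Finset O) : ℝ)

open Finset

section HetPairs

variable {O C : Type*} [DecidableEq C] (cls : O → C)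

def hetOrdPairs (A : Finset O) : Finset (O × O) :=
  A.offDiag.filter (fun p => cls p.1 ≠ cls p.2)

theorem hetPairs_eq_card_hetOrdPairs_div_two [DecidableEq O] (A : Finset O) :
    hetPairs cls A = #(hetOrdPairs cls A) / 2 :=
  rfl

theorem mem_hetOrdPairs {A : Finset O} {p : O × O} :
    p ∈ hetOrdPairs cls A ↔
      p.1 ∈ A ∧ p.2 ∈ A ∧ p.1 ≠ p.2 ∧ cls p.1 ≠ cls p.2 := by
  simp only [hetOrdPairs, mem_filter, mem_offDiag, and_assoc]

-- `Prod.swap` is a fixed-point-free involution of the ordered heterogeneous pairs.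
theorem even_card_hetOrdPairs (A : Finset O) : Even #(hetOrdPairs cls A) := by
  rw [← ZMod.natCast_eq_zero_iff_even, card_eq_sum_ones, Nat.cast_sum, Nat.cast_one]
  refine sum_involution (fun p _ => p.swap) (fun _ _ => rfl) (fun p hp _ => ?_)
    (fun p hp => ?_) (fun p _ => p.swap_swap)
  · exact fun h => ((mem_hetOrdPairs cls).1 hp).2.2.1 (congrArg Prod.fst h).symm
  · obtain ⟨h1, h2, hne, hcls⟩ := (mem_hetOrdPairs cls).1 hp
    exact (mem_hetOrdPairs cls).2 ⟨h2, h1, hne.symm, hcls.symm⟩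

theorem hetOrdPairs_mono {A B : Finset O} (h : A ⊆ B) : hetOrdPairs cls A ⊆ hetOrdPairs cls B :=
  filter_subset_filter _ (offDiag_mono h)

theorem hetOrdPairs_inter [DecidableEq O] (A B : Finset O) :
    hetOrdPairs cls (A ∩ B) = hetOrdPairs cls A ∩ hetOrdPairs cls B := by
  rw [hetOrdPairs, offDiag_inter, filter_inter_distrib]
  rfl

theorem card_hetOrdPairs_add_card_le [DecidableEq O] (A B : Finset O) :
    #(hetOrdPairs cls A) + #(hetOrdPairs cls B) ≤
      #(hetOrdPairs cls (A ∪ B)) + #(hetOrdPairs cls (A ∩ B)) := by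
  rw [← card_union_add_card_inter, hetOrdPairs_inter]
  gcongr
  exact union_subset (hetOrdPairs_mono cls subset_union_left)
    (hetOrdPairs_mono cls subset_union_right)

theorem hetPairs_mono [DecidableEq O] {A B : Finset O} (h : A ⊆ B) :
    hetPairs cls A ≤ hetPairs cls B :=
  Nat.div_le_div_right (card_le_card (hetOrdPairs_mono cls h))

theorem hetPairs_add_hetPairs_le [DecidableEq O] (A B : Finset O) :
    hetPairs cls A + hetPairs cls B ≤ hetPairs cls (A ∪ B) + hetPairs cls (A ∩ B) := by
  -- Halving the counts keeps the inequality since those on the right are even.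
  have hU := even_card_hetOrdPairs cls (A ∪ B)
  have hI := even_card_hetOrdPairs cls (A ∩ B)
  have hsup := card_hetOrdPairs_add_card_le cls A B
  simp only [hetPairs_eq_card_hetOrdPairs_div_two]
  rw [Nat.even_iff] at hU hI
  omega

theorem hetPairs_add_hetPairs_inter_le [DecidableEq O] {A B : Finset O} (N : Finset O)
    (hBA : B ⊆ A) :
    hetPairs cls B + hetPairs cls (A ∩ N) ≤ hetPairs cls A + hetPairs cls (B ∩ N) := by
  calc hetPairs cls B + hetPairs cls (A ∩ N)
      ≤ hetPairs cls (B ∪ A ∩ N) + hetPairs cls (B ∩ (A ∩ N)) :=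
        hetPairs_add_hetPairs_le cls _ _
    _ ≤ hetPairs cls A + hetPairs cls (B ∩ N) := by
      rw [← inter_assoc, inter_eq_left.2 hBA]
      gcongr
      exact hetPairs_mono cls (union_subset hBA inter_subset_left)

end HetPairs

section AgreeSet

variable {O T V : Type*} [Fintype O] [DecidableEq V] (val : T → O → V) (x : O)

theorem agreeSet_anti {S S' : Finset T} (h : S ⊆ S') : agreeSet val x S' ⊆ agreeSet val x S :=
  fun _ hy => by
    simp only [agreeSet, mem_filter] at hy ⊢
    exact ⟨hy.1, fun t ht => hy.2 t (h ht)⟩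

theorem agreeSet_empty : agreeSet val x ∅ = univ := by
  simp [agreeSet]

theorem agreeSet_insert [DecidableEq O] [DecidableEq T] (t : T) (S : Finset T) :
    agreeSet val x (insert t S) = agreeSet val x S ∩ agreeSet val x {t} := by
  ext y
  simp [agreeSet, and_comm]

end AgreeSet

theorem pairExcl_monotone_submodular_general {O T C V : Type*}
    [Fintype O] [DecidableEq O] [DecidableEq T] [DecidableEq C] [DecidableEq V]
    (cls : O → C) (val : T → O → V) (x : O) :
    (∀ S S' : Finset T, S ⊆ S' → pairExcl cls val x S ≤ pairExcl cls val x S') ∧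
    (∀ (S S' : Finset T) (t : T), S ⊆ S' → t ∉ S' →
      pairExcl cls val x (insert t S') - pairExcl cls val x S' ≤
        pairExcl cls val x (insert t S) - pairExcl cls val x S) ∧
    pairExcl cls val x ∅ = 0 ∧
    (∀ S : Finset T, 0 ≤ pairExcl cls val x S ∧ pairExcl cls val x S ≤ 1) := by
  have hm : (0 : ℝ) ≤ hetPairs cls (univ : Finset O) := Nat.cast_nonneg _
  have hle (S : Finset T) :
      (hetPairs cls (agreeSet val x S) : ℝ) ≤ hetPairs cls (univ : Finset O) := by
    exact_mod_cast hetPairs_mono cls (subset_univ _)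
  refine ⟨fun S S' hS => ?_, fun S S' t hS _ => ?_, ?_, fun S => ⟨?_, ?_⟩⟩
  · have := hetPairs_mono cls (agreeSet_anti val x hS)
    unfold pairExcl
    gcongr
  · have key := hetPairs_add_hetPairs_inter_le cls (agreeSet val x {t}) (agreeSet_anti val x hS)
    rw [← agreeSet_insert, ← agreeSet_insert] at key
    unfold pairExcl
    rw [div_sub_div_same, div_sub_div_same]
    refine div_le_div_of_nonneg_right ?_ hm
    have keyR : (hetPairs cls (agreeSet val x S') : ℝ) +
        hetPairs cls (agreeSet val x (insert t S)) ≤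
        hetPairs cls (agreeSet val x S) + hetPairs cls (agreeSet val x (insert t S')) := by
      exact_mod_cast key
    linarith
  · rw [pairExcl, agreeSet_empty, sub_self, zero_div]
  · exact div_nonneg (sub_nonneg.2 (hle S)) hm
  · exact div_le_one_of_le₀ (sub_le_self _ (Nat.cast_nonneg _)) hm

theorem pairExcl_monotone_submodular {O T C V : Type*}
    [Fintype O] [DecidableEq O] [Fintype T] [DecidableEq T] [DecidableEq C] [DecidableEq V]
    (cls : O → C) (val : T → O → V) (x : O)
    (hhet : 0 < hetPairs cls (Finset.univ : Finset O)) :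
    (∀ S S' : Finset T, S ⊆ S' → pairExcl cls val x S ≤ pairExcl cls val x S') ∧
    (∀ (S S' : Finset T) (t : T), S ⊆ S' → t ∉ S' →
      pairExcl cls val x (insert t S') - pairExcl cls val x S' ≤
        pairExcl cls val x (insert t S) - pairExcl cls val x S) ∧
    pairExcl cls val x ∅ = 0 ∧
    (∀ S : Finset T, 0 ≤ pairExcl cls val x S ∧ pairExcl cls val x S ≤ 1) :=
  pairExcl_monotone_submodular_general cls val x
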